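/- For every n ≥ 1 and every nonempty word w0 over {0,1,2}, there exists a word w in the language w0(0⁺w0)* such that sep(w 0^n w, w 0^{n+(2n+1)!} w) ≥ 2n + 2. -/

import Mathlib

open Computability

/-- `sep w x` : the minimum number of states of a DFA accepting `w` and rejecting `x`. -/
noncomputable def sep {α : Type} (w x : List α) : ℕ :=
  sInf {n | ∃ M : DFA α (Fin n), w ∈ M.accepts ∧ x ∉ M.accepts}

/-- The language `0⁺` of nonempty blocks of zeros. -/
def zeroPlus : Language (Fin 3) := {w | ∃ i, 1 ≤ i ∧ w = List.replicate i 0}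

namespace SepAux

section Pp
variable {σ : Type} [Fintype σ] [DecidableEq σ]
variable (f : σ → σ) (L : ℕ)

lemma shift_eq {x : σ} {i c : ℕ} (h : f^[i + c] x = f^[i] x) {j : ℕ} (hj : i ≤ j) :
    f^[j + c] x = f^[j] x := by
  obtain ⟨d, rfl⟩ := Nat.exists_eq_add_of_le hj
  have h1 : i + d + c = d + (i + c) := by ring
  have h2 : i + d = d + i := by ring
  rw [h1, h2, Function.iterate_add_apply f d (i+c), Function.iterate_add_apply f d i, h]

lemma mult_eq {x : σ} {i c : ℕ} (h : f^[i + c] x = f^[i] x) :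
    ∀ k, f^[i + k * c] x = f^[i] x := by
  intro k; induction k with
  | zero => simp
  | succ k ih =>
      have h3 : i + (k+1) * c = (i + k * c) + c := by ring
      rw [h3, shift_eq f h (by omega), ih]

lemma exists_pp_lt (hL : ∀ c, 0 < c → c ≤ Fintype.card σ → c ∣ L) (x : σ) : ∃ p, p < Fintype.card σ ∧ f^[p + L] x = f^[p] x := by
  have hcard : Fintype.card σ < Fintype.card (Fin (Fintype.card σ + 1)) := by simp
  obtain ⟨a, b, hab, he⟩ :=
    Fintype.exists_ne_map_eq_of_card_lt (fun v : Fin (Fintype.card σ + 1) => f^[v.val] x) hcard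
  wlog hlt : a.val < b.val generalizing a b
  · have hne : a.val ≠ b.val := fun h => hab (Fin.ext h)
    exact this b a hab.symm he.symm (by omega)
  · have hc : 0 < b.val - a.val := by omega
    have hcle : b.val - a.val ≤ Fintype.card σ := by omega
    have hdvd := hL _ hc hcle
    have hper : f^[a.val + (b.val - a.val)] x = f^[a.val] x := by
      have : a.val + (b.val - a.val) = b.val := by omega
      rw [this]; exact he.symm
    obtain ⟨k, hk⟩ := hdvd
    refine ⟨a.val, by omega, ?_⟩
    rw [hk]
    have : a.val + (b.val - a.val) * k = a.val + k * (b.val - a.val) := by ring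
    rw [this, mult_eq f hper k]

lemma exists_pp (hL : ∀ c, 0 < c → c ≤ Fintype.card σ → c ∣ L) (x : σ) : ∃ p, f^[p + L] x = f^[p] x := by
  obtain ⟨p, _, hp⟩ := exists_pp_lt f L hL x; exact ⟨p, hp⟩

noncomputable def pp (hL : ∀ c, 0 < c → c ≤ Fintype.card σ → c ∣ L) (x : σ) : ℕ := Nat.find (exists_pp f L hL x)

lemma pp_spec (hL : ∀ c, 0 < c → c ≤ Fintype.card σ → c ∣ L) (x : σ) : f^[pp f L hL x + L] x = f^[pp f L hL x] x := Nat.find_spec (exists_pp f L hL x)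

lemma pp_lt_card (hL : ∀ c, 0 < c → c ≤ Fintype.card σ → c ∣ L) (x : σ) : pp f L hL x < Fintype.card σ := by
  obtain ⟨p, hp1, hp2⟩ := exists_pp_lt f L hL x
  exact lt_of_le_of_lt (Nat.find_min' _ hp2) hp1

lemma pp_stable (hL : ∀ c, 0 < c → c ≤ Fintype.card σ → c ∣ L) {x : σ} {r : ℕ} (hr : pp f L hL x ≤ r) : f^[r + L] x = f^[r] x :=
  shift_eq f (pp_spec f L hL x) hr

lemma iterate_inj (hL : ∀ c, 0 < c → c ≤ Fintype.card σ → c ∣ L) {x : σ} {i j : ℕ} (hij : i < j) (hj : j ≤ pp f L hL x) :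
    f^[i] x ≠ f^[j] x := by
  intro he
  have hc : 0 < j - i := by omega
  have hcle : j - i ≤ Fintype.card σ := by
    have := pp_lt_card f L hL x; omega
  obtain ⟨k, hk⟩ := hL _ hc hcle
  have hper : f^[i + (j - i)] x = f^[i] x := by
    have : i + (j - i) = j := by omega
    rw [this]; exact he.symm
  have : f^[i + L] x = f^[i] x := by
    rw [hk]
    have h2 : i + (j - i) * k = i + k * (j - i) := by ring
    rw [h2, mult_eq f hper k]
  have hf : pp f L hL x ≤ i := Nat.find_min' (exists_pp f L hL x) this
  omega

lemma pp_shift (hL : ∀ c, 0 < c → c ≤ Fintype.card σ → c ∣ L) {x : σ} {v : ℕ} (hv : v ≤ pp f L hL x) :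
    pp f L hL (f^[v] x) = pp f L hL x - v := by
  apply le_antisymm
  · apply Nat.find_min'
    rw [← Function.iterate_add_apply, ← Function.iterate_add_apply]
    have h1 : pp f L hL x - v + L + v = pp f L hL x + L := by omega
    have h2 : pp f L hL x - v + v = pp f L hL x := by omega
    rw [h1, h2]; exact pp_spec f L hL x
  · set p' := pp f L hL (f^[v] x) with hp'
    have hs : f^[p' + L] (f^[v] x) = f^[p'] (f^[v] x) := pp_spec f L hL _
    rw [← Function.iterate_add_apply, ← Function.iterate_add_apply] at hs
    have h3 : p' + L + v = (p' + v) + L := by ring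
    rw [h3] at hs
    have hf : pp f L hL x ≤ p' + v := Nat.find_min' (exists_pp f L hL x) hs
    omega


theorem core (W : σ → σ) (t₀ : ℕ) (ht : 1 ≤ t₀) (hcard : Fintype.card σ ≤ 2 * t₀ + 1)
    (hL : ∀ c, 0 < c → c ≤ Fintype.card σ → c ∣ L)
    (H1 : ∀ a, 1 ≤ a → ∀ p q : σ, W (f^[a] (W p)) = W (f^[a] (W q)) → W p = W q) :
    ∀ r, t₀ ≤ r → ∀ q, W (f^[r] (W q)) = W (f^[r + L] (W q)) := by
  cases isEmpty_or_nonempty σ with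
  | inl he => exact fun r hr q => he.elim q
  | inr hne =>
  obtain ⟨q₁, hq₁⟩ := Finite.exists_max (fun q : σ => pp f L hL (W q))
  suffices h : ∀ d r, t₀ ≤ r → pp f L hL (W q₁) ≤ r + d →
      ∀ q, W (f^[r] (W q)) = W (f^[r + L] (W q)) by
    intro r hr q
    exact h (pp f L hL (W q₁)) r hr (by omega) q
  intro d
  induction d using Nat.strong_induction_on with
  | _ d IH =>
  intro r hr hd
  have aux : ∀ q' : σ, W q' ≠ W q₁ → W (f^[r] (W q')) = W (f^[r + L] (W q')) := by
    intro q' hne'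
    by_cases hpy : pp f L hL (W q') ≤ r
    · rw [pp_stable f L hL hpy]
    · push_neg at hpy
      have hple : pp f L hL (W q') ≤ pp f L hL (W q₁) := hq₁ q'
      have hrp : r < pp f L hL (W q₁) := lt_of_lt_of_le hpy hple
      -- pigeonhole to find a trajectory intersection
      have key : ∃ v w, v < t₀ ∧ w ≤ pp f L hL (W q₁) ∧
          f^[v] (W q') = f^[w] (W q₁) := by
        have hcard2 : Fintype.card σ <
            Fintype.card (Fin t₀ ⊕ Fin (pp f L hL (W q₁) + 1)) := by
          rw [Fintype.card_sum, Fintype.card_fin, Fintype.card_fin]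
          omega
        obtain ⟨a, b, hab, he⟩ := Fintype.exists_ne_map_eq_of_card_lt
          (fun z : Fin t₀ ⊕ Fin (pp f L hL (W q₁) + 1) =>
            Sum.elim (fun v : Fin t₀ => f^[v.val] (W q'))
              (fun w : Fin (pp f L hL (W q₁) + 1) => f^[w.val] (W q₁)) z) hcard2
        rcases a with v | w <;> rcases b with v' | w'
        · exfalso
          simp only [Sum.elim_inl] at he
          have hvv : v.val ≠ v'.val := fun h => hab (by exact congrArg Sum.inl (Fin.ext h))
          rcases Nat.lt_or_ge v.val v'.val with hlt | hge
          · exact iterate_inj f L hL hlt (by have := v'.isLt; omega) he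
          · have hlt : v'.val < v.val := by omega
            exact iterate_inj f L hL hlt (by have := v.isLt; omega) he.symm
        · simp only [Sum.elim_inl, Sum.elim_inr] at he
          exact ⟨v.val, w'.val, v.isLt, by have := w'.isLt; omega, he⟩
        · simp only [Sum.elim_inl, Sum.elim_inr] at he
          exact ⟨v'.val, w.val, v'.isLt, by have := w.isLt; omega, he.symm⟩
        · exfalso
          simp only [Sum.elim_inr] at he
          have hvv : w.val ≠ w'.val := fun h => hab (by exact congrArg Sum.inr (Fin.ext h))
          rcases Nat.lt_or_ge w.val w'.val with hlt | hge
          · exact iterate_inj f L hL hlt (by have := w'.isLt; omega) he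
          · have hlt : w'.val < w.val := by omega
            exact iterate_inj f L hL hlt (by have := w.isLt; omega) he.symm
      obtain ⟨v, w, hvt, hwp, hcross⟩ := key
      have hvppy : v < pp f L hL (W q') := by omega
      have e1 : pp f L hL (W q') - v = pp f L hL (W q₁) - w := by
        have h1 := pp_shift f L hL (le_of_lt hvppy)
        have h2 := pp_shift f L hL hwp
        rw [hcross] at h1
        omega
      have hvw : v < w := by
        rcases Nat.lt_or_ge v w with h | h
        · exact h
        · exfalso
          have hvw' : v = w := by omega
          subst hvw'
          rcases Nat.eq_zero_or_pos v with h0 | h0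
          · subst h0
            simp only [Function.iterate_zero_apply] at hcross
            exact hne' hcross
          · exact hne' (H1 v h0 q' q₁ (congrArg W hcross))
      have key2 : ∀ V, v ≤ V → f^[V] (W q') = f^[V + (w - v)] (W q₁) := by
        intro V hV
        have hVv : V = (V - v) + v := by omega
        rw [hVv, Function.iterate_add_apply, hcross, ← Function.iterate_add_apply]
        congr 1
        omega
      have hd1 : 1 ≤ d := by omega
      have step1 : W (f^[r] (W q')) = W (f^[r + (w - v)] (W q₁)) := by
        rw [key2 r (by omega)]
      have step3 : W (f^[r + L] (W q')) = W (f^[r + (w - v) + L] (W q₁)) := by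
        rw [key2 (r + L) (by omega)]
        congr 2
        omega
      have step2 : W (f^[r + (w - v)] (W q₁)) = W (f^[r + (w - v) + L] (W q₁)) := by
        have hwv1 : 1 ≤ w - v := by omega
        exact IH (d - (w - v)) (by omega) (r + (w - v)) (by omega) (by omega) q₁
      rw [step1, step2, ← step3]
  intro q
  by_cases hqq : W q = W q₁
  · classical
    set S := Finset.image W Finset.univ with hS
    set TA := fun x => W (f^[r] x) with hTA
    set TB := fun x => W (f^[r + L] x) with hTB
    have hmemS : ∀ u : σ, W u ∈ S := fun u =>
      Finset.mem_image.mpr ⟨u, Finset.mem_univ u, rfl⟩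
    have hTAS : ∀ x, TA x ∈ S := fun x => hmemS (f^[r] x)
    have hTBS : ∀ x, TB x ∈ S := fun x => hmemS (f^[r + L] x)
    have hTAinj : ∀ x ∈ S, ∀ x' ∈ S, TA x = TA x' → x = x' := by
      intro x hx x' hx' hEq
      obtain ⟨p, _, rfl⟩ := Finset.mem_image.mp hx
      obtain ⟨p', _, rfl⟩ := Finset.mem_image.mp hx'
      exact H1 r (by omega) p p' hEq
    have hTBinj : ∀ x ∈ S, ∀ x' ∈ S, TB x = TB x' → x = x' := by
      intro x hx x' hx' hEq
      obtain ⟨p, _, rfl⟩ := Finset.mem_image.mp hx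
      obtain ⟨p', _, rfl⟩ := Finset.mem_image.mp hx'
      exact H1 (r + L) (by omega) p p' hEq
    have hagree : ∀ x ∈ S, x ≠ W q₁ → TA x = TB x := by
      intro x hx hxne
      obtain ⟨p, _, rfl⟩ := Finset.mem_image.mp hx
      exact aux p hxne
    have hy₁ : W q₁ ∈ S := hmemS q₁
    set Er := S.erase (W q₁) with hEr
    have hsub : Er.image TA ⊆ S := by
      intro t ht
      obtain ⟨x, _, rfl⟩ := Finset.mem_image.mp ht
      exact hTAS x
    have hcardim : (Er.image TA).card = Er.card := by
      apply Finset.card_image_of_injOn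
      intro x hx x' hx' hEq
      exact hTAinj x (Finset.mem_of_mem_erase hx) x' (Finset.mem_of_mem_erase hx') hEq
    have hcardE : (S \ Er.image TA).card = 1 := by
      rw [Finset.card_sdiff_of_subset hsub, hcardim, Finset.card_erase_of_mem hy₁]
      have : 1 ≤ S.card := Finset.card_pos.mpr ⟨_, hy₁⟩
      omega
    have hTAy : TA (W q₁) ∈ S \ Er.image TA := by
      rw [Finset.mem_sdiff]
      refine ⟨hTAS _, fun hmem => ?_⟩
      obtain ⟨x, hxEr, hEq⟩ := Finset.mem_image.mp hmem
      have := hTAinj x (Finset.mem_of_mem_erase hxEr) (W q₁) hy₁ hEq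
      exact (Finset.ne_of_mem_erase hxEr) this
    have hTBy : TB (W q₁) ∈ S \ Er.image TA := by
      rw [Finset.mem_sdiff]
      refine ⟨hTBS _, fun hmem => ?_⟩
      obtain ⟨x, hxEr, hEq⟩ := Finset.mem_image.mp hmem
      rw [hagree x (Finset.mem_of_mem_erase hxEr) (Finset.ne_of_mem_erase hxEr)] at hEq
      have := hTBinj x (Finset.mem_of_mem_erase hxEr) (W q₁) hy₁ hEq
      exact (Finset.ne_of_mem_erase hxEr) this
    have hone := Finset.card_le_one.mp (le_of_eq hcardE) _ hTAy _ hTBy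
    rw [hqq]
    exact hone
  · exact aux q hqq

end Pp



section Words

variable {m : ℕ}

def f0 (δ : Fin m → Fin 3 → Fin m) : Fin m → Fin m := fun q => δ q 0

def Wm (δ : Fin m → Fin 3 → Fin m) (w : List (Fin 3)) : Fin m → Fin m :=
  fun q => w.foldl δ q

lemma Wm_append (δ : Fin m → Fin 3 → Fin m) (u v : List (Fin 3)) (q : Fin m) :
    Wm δ (u ++ v) q = Wm δ v (Wm δ u q) := by
  simp [Wm, List.foldl_append]

lemma Wm_replicate (δ : Fin m → Fin 3 → Fin m) (a : ℕ) (q : Fin m) :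
    Wm δ (List.replicate a 0) q = (f0 δ)^[a] q := by
  induction a generalizing q with
  | zero => simp [Wm]
  | succ a ih =>
      rw [List.replicate_succ]
      show Wm δ (0 :: List.replicate a 0) q = (f0 δ)^[a+1] q
      have : Wm δ (0 :: List.replicate a 0) q = Wm δ (List.replicate a 0) (δ q 0) := rfl
      rw [this, ih, Function.iterate_succ_apply]
      rfl

lemma Wm_decomp (δ : Fin m → Fin 3 → Fin m) (w : List (Fin 3)) (a : ℕ) (q : Fin m) :
    Wm δ (w ++ List.replicate a 0 ++ w) q = Wm δ w ((f0 δ)^[a] (Wm δ w q)) := by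
  rw [Wm_append, Wm_append, Wm_replicate]

end Words

inductive Ext : List (Fin 3) → List (Fin 3) → Prop
  | refl (v) : Ext v v
  | step {v x} (a : ℕ) (ha : 1 ≤ a) (h : Ext v x) : Ext v (x ++ List.replicate a 0 ++ x)

lemma Ext.trans {u v x : List (Fin 3)} (h1 : Ext u v) (h2 : Ext v x) : Ext u x := by
  induction h2 with
  | refl => exact h1
  | step a ha h ih => exact Ext.step a ha ih

lemma Ext.decomp {v x : List (Fin 3)} (h : Ext v x) :
    x = v ∨ ∃ z, x = v ++ z ++ v := by
  induction h with
  | refl => exact Or.inl rfl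
  | step a ha h ih =>
      rcases ih with rfl | ⟨z, rfl⟩
      · exact Or.inr ⟨List.replicate a 0, rfl⟩
      · refine Or.inr ⟨z ++ v ++ List.replicate a 0 ++ v ++ z, ?_⟩
        simp [List.append_assoc]

section Q

variable (n L : ℕ) {m : ℕ}

def Qp (δ : Fin m → Fin 3 → Fin m) (w : List (Fin 3)) : Prop :=
  ∀ q, Wm δ w ((f0 δ)^[n] (Wm δ w q)) = Wm δ w ((f0 δ)^[n + L] (Wm δ w q))

lemma Qp_ext {δ : Fin m → Fin 3 → Fin m} {w x : List (Fin 3)}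
    (hQ : Qp n L δ w) (hext : Ext w x) : Qp n L δ x := by
  rcases Ext.decomp hext with rfl | ⟨z, rfl⟩
  · exact hQ
  · intro q
    have hfold : ∀ s, Wm δ (w ++ z ++ w) s = Wm δ w (Wm δ z (Wm δ w s)) := by
      intro s; rw [Wm_append, Wm_append]
    rw [hfold q]
    set p := Wm δ z (Wm δ w q) with hp
    rw [hfold ((f0 δ)^[n] (Wm δ w p)), hfold ((f0 δ)^[n + L] (Wm δ w p))]
    rw [hQ p]

end Q


section Ach

variable (n L : ℕ) {m : ℕ}

lemma ach (hn : 1 ≤ n) (hm : m ≤ 2 * n + 1) (hL : ∀ c, 0 < c → c ≤ m → c ∣ L)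
    (δ : Fin m → Fin 3 → Fin m) :
    ∀ k (v : List (Fin 3)), (Finset.image (Wm δ v) Finset.univ).card ≤ k →
      ∃ x, Ext v x ∧ Qp n L δ x := by
  intro k
  induction k with
  | zero =>
      intro v hv
      refine ⟨v, Ext.refl v, fun q => ?_⟩
      exfalso
      have h0 : (Finset.image (Wm δ v) Finset.univ).card = 0 := by omega
      have hemp := Finset.image_eq_empty.mp (Finset.card_eq_zero.mp h0)
      exact absurd (Finset.mem_univ q) (by rw [hemp]; exact Finset.notMem_empty q)
  | succ k IH =>
      intro v hv
      by_cases H1 : ∀ a, 1 ≤ a → ∀ p q : Fin m,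
          Wm δ v ((f0 δ)^[a] (Wm δ v p)) = Wm δ v ((f0 δ)^[a] (Wm δ v q)) →
            Wm δ v p = Wm δ v q
      · refine ⟨v, Ext.refl v, fun q => ?_⟩
        exact core (f0 δ) L (Wm δ v) n hn (by simpa using hm)
          (by simpa using hL) H1 n le_rfl q
      · push_neg at H1
        obtain ⟨a, ha, p, q, hEq, hNe⟩ := H1
        set φ : Fin m → Fin m := fun s => Wm δ v ((f0 δ)^[a] s) with hφ
        set S := Finset.image (Wm δ v) Finset.univ with hS
        have hWx' : Wm δ (v ++ List.replicate a 0 ++ v) = fun s => φ (Wm δ v s) := by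
          funext s; rw [Wm_decomp]
        have h1 : Finset.image (Wm δ (v ++ List.replicate a 0 ++ v)) Finset.univ
            = S.image φ := by
          rw [hWx', hS, Finset.image_image]
          rfl
        have h2 : S.image φ = (S.erase (Wm δ v p)).image φ := by
          apply Finset.Subset.antisymm
          · intro t ht
            obtain ⟨s, hs, rfl⟩ := Finset.mem_image.mp ht
            by_cases hsp : s = Wm δ v p
            · subst hsp
              refine Finset.mem_image.mpr ⟨Wm δ v q, ?_, ?_⟩
              · exact Finset.mem_erase.mpr ⟨Ne.symm hNe,
                  Finset.mem_image.mpr ⟨q, Finset.mem_univ q, rfl⟩⟩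
              · exact hEq.symm
            · exact Finset.mem_image.mpr ⟨s, Finset.mem_erase.mpr ⟨hsp, hs⟩, rfl⟩
          · exact Finset.image_subset_image (Finset.erase_subset _ _)
        have hpS : Wm δ v p ∈ S := Finset.mem_image.mpr ⟨p, Finset.mem_univ p, rfl⟩
        have hcard' : (Finset.image (Wm δ (v ++ List.replicate a 0 ++ v)) Finset.univ).card ≤ k := by
          rw [h1, h2]
          have hle := Finset.card_image_le (s := S.erase (Wm δ v p)) (f := φ)
          have he := Finset.card_erase_of_mem hpS
          have hpos : 1 ≤ S.card := Finset.card_pos.mpr ⟨_, hpS⟩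
          omega
        obtain ⟨x, hext, hQ⟩ := IH (v ++ List.replicate a 0 ++ v) hcard'
        exact ⟨x, Ext.trans (Ext.step a ha (Ext.refl v)) hext, hQ⟩

end Ach


section Family

variable (n : ℕ)

abbrev Fam := Σ mm : Fin (2 * n + 2), (Fin mm.val → Fin 3 → Fin mm.val)

lemma fam_ach (hn : 1 ≤ n) (s : Finset (Fam n)) :
    ∀ v : List (Fin 3), ∃ x, Ext v x ∧
      ∀ e ∈ s, Qp n ((2 * n + 1).factorial) e.2 x := by
  classical
  induction s using Finset.induction_on with
  | empty => exact fun v => ⟨v, Ext.refl v, by simp⟩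
  | insert _ _ hnotin ih =>
      rename_i e s
      intro v
      obtain ⟨w₁, hext₁, hall⟩ := ih v
      have hm : (e.1 : ℕ) ≤ 2 * n + 1 := by have := e.1.isLt; omega
      have hL : ∀ c, 0 < c → c ≤ (e.1 : ℕ) → c ∣ (2 * n + 1).factorial := by
        intro c hc hcle
        exact Nat.dvd_factorial hc (by omega)
      obtain ⟨x, hext₂, hQ⟩ := ach n ((2 * n + 1).factorial) hn hm hL e.2
        (Finset.image (Wm e.2 w₁) Finset.univ).card w₁ le_rfl
      refine ⟨x, Ext.trans hext₁ hext₂, ?_⟩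
      intro e' he'
      rcases Finset.mem_insert.mp he' with rfl | he's
      · exact hQ
      · exact Qp_ext n _ (hall e' he's) hext₂

end Family

section LangSec

variable (w0 : List (Fin 3))

lemma lang_of_rep {v : List (Fin 3)}
    (h : ∃ T : List (List (Fin 3)),
      (∀ t ∈ T, t ∈ (zeroPlus * ({w0} : Language (Fin 3)))) ∧ v = w0 ++ T.flatten) :
    v ∈ ({w0} : Language (Fin 3)) * (zeroPlus * {w0})∗ := by
  obtain ⟨T, hT, rfl⟩ := h
  exact Language.append_mem_mul rfl (Language.join_mem_kstar hT)

lemma rep_ext {v x : List (Fin 3)} (hext : Ext v x)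
    (h : ∃ T : List (List (Fin 3)),
      (∀ t ∈ T, t ∈ (zeroPlus * ({w0} : Language (Fin 3)))) ∧ v = w0 ++ T.flatten) :
    ∃ T : List (List (Fin 3)),
      (∀ t ∈ T, t ∈ (zeroPlus * ({w0} : Language (Fin 3)))) ∧ x = w0 ++ T.flatten := by
  induction hext with
  | refl => exact h
  | step a ha hext ih =>
      obtain ⟨T, hT, rfl⟩ := ih
      refine ⟨T ++ [List.replicate a 0 ++ w0] ++ T, ?_, ?_⟩
      · intro t ht
        simp only [List.mem_append, List.mem_singleton] at ht
        rcases ht with (ht | rfl) | ht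
        · exact hT t ht
        · exact Language.append_mem_mul ⟨a, ha, rfl⟩ rfl
        · exact hT t ht
      · simp [List.append_assoc]

lemma lang_mem {x : List (Fin 3)} (hext : Ext w0 x) :
    x ∈ ({w0} : Language (Fin 3)) * (zeroPlus * {w0})∗ :=
  lang_of_rep w0 (rep_ext w0 hext ⟨[], by simp, by simp⟩)

end LangSec

section Count

def cntM (N acc : ℕ) : DFA (Fin 3) (Fin (N + 1)) where
  step := fun q _ => ⟨min (q.val + 1) N, by omega⟩
  start := ⟨0, by omega⟩
  accept := {q | q.val = acc}

lemma cnt_eval (N acc : ℕ) : ∀ (x : List (Fin 3)) (q : Fin (N + 1)),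
    ((cntM N acc).evalFrom q x).val = min (q.val + x.length) N := by
  intro x
  induction x with
  | nil =>
      intro q
      have := q.isLt
      simp [DFA.evalFrom]
      omega
  | cons a x ih =>
      intro q
      have hstep : (cntM N acc).evalFrom q (a :: x)
          = (cntM N acc).evalFrom ((cntM N acc).step q a) x := rfl
      rw [hstep, ih]
      have := q.isLt
      simp only [cntM, List.length_cons]
      omega

lemma exists_sep {u₁ u₂ : List (Fin 3)} (h : u₁.length < u₂.length) :
    ∃ k, ∃ M : DFA (Fin 3) (Fin k), u₁ ∈ M.accepts ∧ u₂ ∉ M.accepts := by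
  refine ⟨u₂.length + 1, cntM u₂.length u₁.length, ?_, ?_⟩
  · rw [DFA.mem_accepts]
    show ((cntM u₂.length u₁.length).evalFrom _ u₁).val = u₁.length
    rw [cnt_eval]
    simp [cntM]
    omega
  · rw [DFA.mem_accepts]
    show ¬ ((cntM u₂.length u₁.length).evalFrom _ u₂).val = u₁.length
    rw [cnt_eval]
    simp [cntM]
    omega

end Count

end SepAux

theorem stmt_8 (n : ℕ) (hn : 1 ≤ n) (w0 : List (Fin 3)) (hw0 : w0 ≠ []) :
    ∃ w ∈ ({w0} : Language (Fin 3)) * (zeroPlus * {w0})∗,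
      2 * n + 2 ≤ sep (w ++ List.replicate n 0 ++ w)
        (w ++ List.replicate (n + Nat.factorial (2 * n + 1)) 0 ++ w) := by
  classical
  obtain ⟨w, hext, hQ⟩ := SepAux.fam_ach n hn Finset.univ w0
  refine ⟨w, SepAux.lang_mem w0 hext, ?_⟩
  set L := Nat.factorial (2 * n + 1) with hLdef
  set u₁ := w ++ List.replicate n 0 ++ w with hu₁
  set u₂ := w ++ List.replicate (n + L) 0 ++ w with hu₂
  have hlen : u₁.length < u₂.length := by
    have := Nat.factorial_pos (2 * n + 1)
    simp only [hu₁, hu₂, List.length_append, List.length_replicate]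
    omega
  obtain ⟨k₀, M₀, hM₀⟩ := SepAux.exists_sep hlen
  unfold sep
  refine le_csInf ⟨k₀, ⟨M₀, hM₀⟩⟩ ?_
  rintro b ⟨M, hacc, hrej⟩
  by_contra hlt
  push_neg at hlt
  have hQb := hQ ⟨⟨b, by omega⟩, M.step⟩ (Finset.mem_univ _)
  have hev : M.eval u₁ = M.eval u₂ := by
    show SepAux.Wm M.step u₁ M.start = SepAux.Wm M.step u₂ M.start
    rw [hu₁, hu₂, SepAux.Wm_decomp, SepAux.Wm_decomp]
    exact hQb M.start
  rw [DFA.mem_accepts] at hacc hrej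
  rw [hev] at hacc
  exact hrej hacc
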